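/- Let f : ℝⁿ → ℝ be C^{1,1} near x with ∇f(x) = 0. Then the following are equivalent: (i) for every h with ‖h‖ = 1 and every p ∈ D*(∂f)(x,0)(h), ⟨p, h⟩ > 0; (ii) there exists β > 0 such that ⟨Qh, h⟩ ≥ β for every Q ∈ D̄²f(x,0) and every h with ‖h‖ = 1. -/

import Mathlib

/-!
Near `x` the graph of `∂f` is the graph of the Lipschitz map `∇f`. At a point `y` where `∇f` is
differentiable, `(∇²f(y)ᵀ w, -w)` is a Fréchet normal to it, so `(Qᵀ h, -h)` is a limiting normal
at `(x, 0)` for every `Q ∈ D̄²f(x, 0)`: (i) makes every such `Q` positive definite, and since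
`D̄²f(x, 0)` is compact (closed, and bounded by the Lipschitz constant of `∇f`) the bound is
uniform. Conversely, by compactness (ii) gives `∇²f(y) ⪰ β/2` at every point of differentiability
of `∇f` near `x`. By Rademacher and Fubini, `∇f` is differentiable almost everywhere on almost
every segment, so integrating along segments shows that `∇f` is `β/2`-strongly monotone near `x`.
Testing a Fréchet normal `(a, -s)` at `(y, ∇f y)` against the graph point over `y - t s` then gives
`⟪a, s⟫ ≥ β/2 ‖s‖²`, and this passes to limiting normals.
-/

open Filter Topology Metric Set
open scoped RealInnerProductSpace

noncomputable section

namespace Paper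

attribute [local instance] Classical.propDecidable

/-- Ambient Euclidean space `ℝⁿ`. -/
abbrev E (n : ℕ) := EuclideanSpace ℝ (Fin n)

variable {n : ℕ}

/-- A proper extended-real-valued function: never `-∞` and finite somewhere. -/
def ProperFn (f : E n → EReal) : Prop :=
  (∀ x, f x ≠ ⊥) ∧ ∃ x, f x ≠ ⊤

/-- The proximal subdifferential `∂_p f(x)`. -/
def proxSubdiff (f : E n → EReal) (x : E n) : Set (E n) :=
  {z | ∃ r : ℝ, 0 ≤ r ∧ ∃ δ : ℝ, 0 < δ ∧ ∀ x' : E n, ‖x' - x‖ < δ →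
      f x + ((⟪z, x' - x⟫ - r / 2 * ‖x' - x‖ ^ 2 : ℝ) : EReal) ≤ f x'}

/-- The limiting (Mordukhovich) subdifferential `∂ f(x)`. -/
def limSubdiff (f : E n → EReal) (x : E n) : Set (E n) :=
  {z | ∃ xk zk : ℕ → E n,
      (∀ k, zk k ∈ proxSubdiff f (xk k)) ∧
      Tendsto xk atTop (𝓝 x) ∧
      Tendsto (fun k => f (xk k)) atTop (𝓝 (f x)) ∧
      Tendsto zk atTop (𝓝 z)}

/-- The singular limiting subdifferential `∂^∞ f(x)`. -/
def singSubdiff (f : E n → EReal) (x : E n) : Set (E n) :=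
  {z | ∃ (xk zk : ℕ → E n) (lk : ℕ → ℝ),
      (∀ k, zk k ∈ proxSubdiff f (xk k)) ∧ (∀ k, 0 < lk k) ∧
      Tendsto xk atTop (𝓝 x) ∧
      Tendsto (fun k => f (xk k)) atTop (𝓝 (f x)) ∧
      Tendsto lk atTop (𝓝 0) ∧
      Tendsto (fun k => lk k • zk k) atTop (𝓝 z)}

/-- `f` is quadratically minorised (prox-bounded). -/
def QuadMinorized (f : E n → EReal) (xb : E n) : Prop :=
  ∃ α R : ℝ, 0 < R ∧ ∀ x, ((α - R / 2 * ‖x - xb‖ ^ 2 : ℝ) : EReal) ≤ f x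

/-- `f` is prox-regular at `xb` for `zb` with respect to `ε` and `r`. -/
def ProxRegularAt (f : E n → EReal) (xb zb : E n) (ε r : ℝ) : Prop :=
  0 < ε ∧ 0 ≤ r ∧ zb ∈ limSubdiff f xb ∧
  ∀ x z : E n, z ∈ limSubdiff f x → ‖x - xb‖ ≤ ε → ‖z - zb‖ ≤ ε →
    f x ≤ f xb + (ε : EReal) → f xb ≤ f x + (ε : EReal) →
    ∀ x' : E n, ‖x' - xb‖ ≤ ε →
      f x + ((⟪z, x' - x⟫ - r / 2 * ‖x' - x‖ ^ 2 : ℝ) : EReal) ≤ f x'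

/-- `f` is subdifferentially continuous at `xb` for `zb`. -/
def SubdiffContinuousAt (f : E n → EReal) (xb zb : E n) : Prop :=
  ∀ δ : ℝ, 0 < δ → ∃ ε : ℝ, 0 < ε ∧ ∀ x z : E n, z ∈ limSubdiff f x →
    ‖x - xb‖ ≤ ε → ‖z - zb‖ ≤ ε →
    f x ≤ f xb + (δ : EReal) ∧ f xb ≤ f x + (δ : EReal)

/-- The subjet `∂^{2,-} f(x)`: pairs `(∇φ(x), ∇²φ(x))` for `C²` functions `φ`
with `f - φ` having a local minimum at `x`. -/
def subjet (f : E n → EReal) (x : E n) : Set (E n × (E n →L[ℝ] E n)) :=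
  {p | ∃ φ : E n → ℝ, ContDiff ℝ 2 φ ∧
      IsLocalMin (fun y => f y - ((φ y : ℝ) : EReal)) x ∧
      p.1 = gradient φ x ∧ p.2 = fderiv ℝ (gradient φ) x}

/-- Pointwise subhessians `∂^{2,-} f(x,z)`. -/
def subhessian (f : E n → EReal) (x z : E n) : Set (E n →L[ℝ] E n) :=
  {Q | (z, Q) ∈ subjet f x}

/-- The limiting subjet `∂̲² f(x)`. -/
def limSubjet (f : E n → EReal) (x : E n) : Set (E n × (E n →L[ℝ] E n)) :=
  {p | ∃ (xk : ℕ → E n) (pk : ℕ → E n × (E n →L[ℝ] E n)),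
      (∀ k, pk k ∈ subjet f (xk k)) ∧
      Tendsto xk atTop (𝓝 x) ∧
      Tendsto (fun k => f (xk k)) atTop (𝓝 (f x)) ∧
      Tendsto pk atTop (𝓝 p)}

/-- The limiting subhessians `∂̲² f(x,z)`. -/
def limSubhessian (f : E n → EReal) (x z : E n) : Set (E n →L[ℝ] E n) :=
  {Q | (z, Q) ∈ limSubjet f x}

/-- The rank-one support `q(𝒜)(h) = sup {⟨Q h, h⟩ : Q ∈ 𝒜}`. -/
def q1 (A : Set (E n →L[ℝ] E n)) (h : E n) : EReal :=
  ⨆ Q ∈ A, ((⟪Q h, h⟫ : ℝ) : EReal)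

/-- The rank-one barrier cone `b¹(𝒜) = dom q(𝒜)`. -/
def b1 (A : Set (E n →L[ℝ] E n)) : Set (E n) :=
  {h | q1 A h < ⊤}

/-- Support function `δ*_C`. -/
def suppFn (C : Set (E n)) (u : E n) : EReal :=
  ⨆ z ∈ C, ((⟪z, u⟫ : ℝ) : EReal)

/-- The set of minimisers of the tilted function `f - ⟨·, z⟩` over the closed
`ε`-ball around `xb`. -/
def tiltArgmin (f : E n → EReal) (xb : E n) (ε : ℝ) (z : E n) : Set (E n) :=
  {x | ‖x - xb‖ ≤ ε ∧ ∀ y : E n, ‖y - xb‖ ≤ ε →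
      f x - ((⟪x, z⟫ : ℝ) : EReal) ≤ f y - ((⟪y, z⟫ : ℝ) : EReal)}

/-- `xb` gives a tilt stable local minimum of `f` with radius `ε`. -/
def TiltStableWith (f : E n → EReal) (xb : E n) (ε : ℝ) : Prop :=
  0 < ε ∧ f xb ≠ ⊤ ∧ f xb ≠ ⊥ ∧
  ∃ (m : E n → E n) (δ : ℝ) (L : NNReal), 0 < δ ∧
    LipschitzOnWith L m (ball (0 : E n) δ) ∧ m 0 = xb ∧
    ∀ z ∈ ball (0 : E n) δ, tiltArgmin f xb ε z = {m z}

/-- `xb` gives a tilt stable local minimum of `f`. -/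
def TiltStable (f : E n → EReal) (xb : E n) : Prop :=
  ∃ ε : ℝ, TiltStableWith f xb ε

/-- Tilted argmin relative to a subspace `W`. -/
def tiltArgminOn (W : Submodule ℝ (E n)) (f : E n → EReal) (xb : E n) (ε : ℝ)
    (z : E n) : Set (E n) :=
  {x | x ∈ W ∧ ‖x - xb‖ ≤ ε ∧ ∀ y ∈ (W : Set (E n)), ‖y - xb‖ ≤ ε →
      f x - ((⟪x, z⟫ : ℝ) : EReal) ≤ f y - ((⟪y, z⟫ : ℝ) : EReal)}

/-- Tilt stable local minimum of a function considered on a subspace `W`. -/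
def TiltStableOnWith (W : Submodule ℝ (E n)) (f : E n → EReal) (xb : E n)
    (ε : ℝ) : Prop :=
  0 < ε ∧ f xb ≠ ⊤ ∧ f xb ≠ ⊥ ∧
  ∃ (m : E n → E n) (δ : ℝ) (L : NNReal), 0 < δ ∧
    LipschitzOnWith L m (ball (0 : E n) δ ∩ (W : Set (E n))) ∧ m 0 = xb ∧
    ∀ z ∈ ball (0 : E n) δ ∩ (W : Set (E n)), tiltArgminOn W f xb ε z = {m z}

def TiltStableOn (W : Submodule ℝ (E n)) (f : E n → EReal) (xb : E n) : Prop :=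
  ∃ ε : ℝ, TiltStableOnWith W f xb ε

/-- Epigraph with real heights. -/
def epiR (h : E n → EReal) : Set (E n × ℝ) :=
  {p | h p.1 ≤ (p.2 : EReal)}

/-- Lower semicontinuous convex hull `co h`: its epigraph is the closed convex
hull of the epigraph of `h`. -/
def coHull (h : E n → EReal) : E n → EReal :=
  fun w => sInf ((fun c : ℝ => (c : EReal)) ''
    {c : ℝ | (w, c) ∈ closure (convexHull ℝ (epiR h))})

/-- Convex (Fenchel) conjugate. -/
def conj (g : E n → EReal) (z : E n) : EReal :=
  ⨆ x : E n, ((⟪z, x⟫ : ℝ) : EReal) - g x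

/-- Convex conjugate with respect to a subspace `W`. -/
def conjOn (W : Submodule ℝ (E n)) (g : E n → EReal) (z : E n) : EReal :=
  ⨆ x : W, ((⟪z, (x : E n)⟫ : ℝ) : EReal) - g (x : E n)

/-- The subdifferential of convex analysis `∂_co g(u)`. -/
def convexSubdiff (g : E n → EReal) (u : E n) : Set (E n) :=
  {z | ∀ u' : E n, g u + ((⟪z, u' - u⟫ : ℝ) : EReal) ≤ g u'}

/-- The convex subdifferential relative to a subspace `W`. -/
def convexSubdiffOn (W : Submodule ℝ (E n)) (g : E n → EReal) (u : E n) :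
    Set (E n) :=
  {z | z ∈ W ∧ ∀ u' ∈ (W : Set (E n)), g u + ((⟪z, u' - u⟫ : ℝ) : EReal) ≤ g u'}

/-- Orthogonal projection onto `W` as a map `E n →L[ℝ] E n`. -/
def projE (W : Submodule ℝ (E n)) : E n →L[ℝ] E n :=
  W.subtypeL.comp (W.orthogonalProjection)

/-- Fréchet (regular) normals to a subset of a product. -/
def frechetNormal2 (S : Set (E n × E n)) (p : E n × E n) : Set (E n × E n) :=
  {v | ∀ ε : ℝ, 0 < ε → ∃ δ : ℝ, 0 < δ ∧ ∀ q ∈ S,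
      ‖q.1 - p.1‖ < δ → ‖q.2 - p.2‖ < δ →
      ⟪v.1, q.1 - p.1⟫ + ⟪v.2, q.2 - p.2⟫ ≤ ε * (‖q.1 - p.1‖ + ‖q.2 - p.2‖)}

/-- Limiting (Mordukhovich) normals to a subset of a product. -/
def limNormal2 (S : Set (E n × E n)) (p : E n × E n) : Set (E n × E n) :=
  {v | ∃ pk vk : ℕ → E n × E n,
      (∀ k, pk k ∈ S ∧ vk k ∈ frechetNormal2 S (pk k)) ∧
      Tendsto pk atTop (𝓝 p) ∧ Tendsto vk atTop (𝓝 v)}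

/-- The Mordukhovich coderivative `D* F(x,y)(w)` of a set-valued map. -/
def coderiv (F : E n → Set (E n)) (x y w : E n) : Set (E n) :=
  {p | (p, -w) ∈ limNormal2 {q : E n × E n | q.2 ∈ F q.1} (x, y)}

/-- Limiting Hessians `D̄² f(x,z)` of a real-valued function. -/
def limHessians (f : E n → ℝ) (x z : E n) : Set (E n →L[ℝ] E n) :=
  {Q | ∃ xk : ℕ → E n,
      (∀ k, DifferentiableAt ℝ (gradient f) (xk k)) ∧
      Tendsto xk atTop (𝓝 x) ∧
      Tendsto (fun k => f (xk k)) atTop (𝓝 (f x)) ∧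
      Tendsto (fun k => gradient f (xk k)) atTop (𝓝 z) ∧
      Tendsto (fun k => fderiv ℝ (gradient f) (xk k)) atTop (𝓝 Q)}

/-- `f` is `C^{1,1}` near `x`: differentiable with locally Lipschitz gradient. -/
def C11Near (f : E n → ℝ) (x : E n) : Prop :=
  ∃ δ : ℝ, 0 < δ ∧ (∀ y ∈ ball x δ, DifferentiableAt ℝ f y) ∧
    ∃ L : NNReal, LipschitzOnWith L (gradient f) (ball x δ)

/-- Second-order difference quotient `Δ₂`. -/
def delta2 (g : E n → EReal) (x : E n) (t : ℝ) (z u : E n) : EReal :=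
  ((2 / t ^ 2 : ℝ) : EReal) *
    (g (x + t • u) - g x - ((t * ⟪z, u⟫ : ℝ) : EReal))

/-- Lower second-order Dini directional derivative `g″₋(x, z, h)`. -/
def dini2 (g : E n → EReal) (x z h : E n) : EReal :=
  liminf (fun p : ℝ × E n => delta2 g x p.1 z p.2) ((𝓝[>] (0 : ℝ)) ×ˢ 𝓝 h)

/-- Convexity for extended-real-valued functions. -/
def ERealConvexFn (g : E n → EReal) : Prop :=
  ∀ x y : E n, ∀ a b : ℝ, 0 ≤ a → 0 ≤ b → a + b = 1 →
    g (a • x + b • y) ≤ (a : EReal) * g x + (b : EReal) * g y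

/-- Indicator of the box `B_ε^{U'}(0) ⊕ B_ε^{U'^⊥}(0)`. -/
def boxInd (U' : Submodule ℝ (E n)) (ε : ℝ) (w : E n) : EReal :=
  if ‖projE U' w‖ ≤ ε ∧ ‖projE U'ᗮ w‖ ≤ ε then 0 else ⊤

/-- The localised auxiliary function `h(w) := f(xb+w) + δ_{B_ε^{U'}(0) ⊕ B_ε^{V'}(0)}(w)`. -/
def hFn (f : E n → EReal) (xb : E n) (U' : Submodule ℝ (E n)) (ε : ℝ)
    (w : E n) : EReal :=
  f (xb + w) + boxInd U' ε w

/-- The localised `U'`-Lagrangian `L^ε_{U'}`. -/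
def Lloc (f : E n → EReal) (xb : E n) (U' : Submodule ℝ (E n)) (ε : ℝ)
    (zbV : E n) : E n → EReal := fun u =>
  if u ∈ U' ∧ ‖u‖ ≤ ε then
    sInf ((fun v' : E n => f (xb + u + v') - ((⟪zbV, v'⟫ : ℝ) : EReal)) ''
      {v' : E n | v' ∈ U'ᗮ ∧ ‖v'‖ ≤ ε})
  else ⊤

/-- The auxiliary function `k_v(u) := h(u+v(u)) - ⟨zb_{V'}, u+v(u)⟩`. -/
def kFn (f : E n → EReal) (xb : E n) (U' : Submodule ℝ (E n)) (ε : ℝ)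
    (zbV : E n) (v : E n → E n) : E n → EReal := fun u =>
  hFn f xb U' ε (u + v u) - ((⟪zbV, u + v u⟫ : ℝ) : EReal)

/-- `w` is a minimiser of `v' ↦ f(xb+u+v') - ⟨zbV, v'⟩` over `V' ∩ B_ε(0)`. -/
def IsVSel (f : E n → EReal) (xb : E n) (V' : Submodule ℝ (E n)) (ε : ℝ)
    (zbV : E n) (u w : E n) : Prop :=
  w ∈ V' ∧ ‖w‖ ≤ ε ∧ ∀ w' ∈ (V' : Set (E n)), ‖w'‖ ≤ ε →
    f (xb + u + w) - ((⟪zbV, w⟫ : ℝ) : EReal) ≤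
      f (xb + u + w') - ((⟪zbV, w'⟫ : ℝ) : EReal)

/-- Global argmin set of the tilted function `g - ⟨·, z⟩` (the map `m_h`). -/
def msetArg (g : E n → EReal) (z : E n) : Set (E n) :=
  {w | ∀ w' : E n, g w - ((⟪w, z⟫ : ℝ) : EReal) ≤ g w' - ((⟪w', z⟫ : ℝ) : EReal)}

open MeasureTheory
open scoped NNReal

theorem _root_.LipschitzOnWith.mul_sub_le_sub_of_ae_hasDerivAt {φ : ℝ → ℝ} {K : ℝ≥0} {a b m : ℝ}
    (hab : a ≤ b) (hφ : LipschitzOnWith K φ (Icc a b))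
    (hder : ∀ᵐ t, t ∈ Icc a b → ∃ d, HasDerivAt φ d t ∧ m ≤ d) :
    m * (b - a) ≤ φ b - φ a := by
  have hac : AbsolutelyContinuousOnInterval φ a b :=
    LipschitzOnWith.absolutelyContinuousOnInterval (by rwa [uIcc_of_le hab])
  have hm : (fun _ => m) ≤ᵐ[volume.restrict (Icc a b)] deriv φ := by
    rw [EventuallyLE, ae_restrict_iff' measurableSet_Icc]
    filter_upwards [hder] with t ht htI
    obtain ⟨d, hd, hmd⟩ := ht htI
    rwa [hd.deriv]
  calc m * (b - a) = ∫ _ in a..b, m := by simp [mul_comm]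
    _ ≤ ∫ t in a..b, deriv φ t :=
      intervalIntegral.integral_mono_ae_restrict hab intervalIntegrable_const
        hac.intervalIntegrable_deriv hm
    _ = φ b - φ a := hac.integral_deriv_eq_sub

theorem ae_ae_add_add_smul {F : Type*} [NormedAddCommGroup F] [NormedSpace ℝ F]
    [FiniteDimensional ℝ F] [MeasurableSpace F] [BorelSpace F] (μ : Measure F) [SFinite μ]
    [μ.IsAddLeftInvariant] {p : F → Prop} (hp : MeasurableSet {y | p y})
    (h : ∀ᵐ y ∂μ, p y) (a d : F) :
    ∀ᵐ w ∂μ, ∀ᵐ t : ℝ, p (a + w + t • d) := by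
  rw [Measure.ae_ae_comm (p := fun w t => p (a + w + t • d))
    (hp.preimage (f := fun x : F × ℝ => a + x.1 + x.2 • d) (by fun_prop))]
  refine ae_of_all _ fun t => ?_
  filter_upwards [(measurePreserving_add_left μ (a + t • d)).quasiMeasurePreserving.ae h]
    with w hw
  rwa [add_right_comm]

section StrongMonotonicity

variable {F : Type*} [NormedAddCommGroup F] [InnerProductSpace ℝ F]
  {g : F → F} {U : Set F} {K : ℝ≥0} {c : ℝ}

def StronglyMonotoneOn (c : ℝ) (g : F → F) (s : Set F) : Prop :=
  ∀ a ∈ s, ∀ b ∈ s, c * ‖b - a‖ ^ 2 ≤ ⟪g b - g a, b - a⟫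

theorem mul_norm_sq_le_inner_of_forall_norm_eq_one {A : F →L[ℝ] F}
    (hA : ∀ u, ‖u‖ = 1 → c ≤ ⟪A u, u⟫) (u : F) : c * ‖u‖ ^ 2 ≤ ⟪A u, u⟫ := by
  rcases eq_or_ne u 0 with rfl | hu
  · simp
  have := hA (‖u‖⁻¹ • u) (norm_smul_inv_norm hu)
  rw [map_smul, real_inner_smul_left, real_inner_smul_right, ← mul_assoc, ← sq,
    inv_pow, inv_mul_eq_div, le_div_iff₀ (by positivity)] at this
  exact this

theorem _root_.LipschitzOnWith.mul_norm_sq_le_inner_sub_of_ae_segment (hg : LipschitzOnWith K g U)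
    (hc : ∀ y ∈ U, DifferentiableAt ℝ g y → ∀ u, c * ‖u‖ ^ 2 ≤ ⟪fderiv ℝ g y u, u⟫)
    {a d : F} (hseg : MapsTo (fun t : ℝ => a + t • d) (Icc 0 1) U)
    (hae : ∀ᵐ t : ℝ, a + t • d ∈ U → DifferentiableAt ℝ g (a + t • d)) :
    c * ‖d‖ ^ 2 ≤ ⟪g (a + d) - g a, d⟫ := by
  have hline : LipschitzWith _ (fun t : ℝ => a + t • d) :=
    (LipschitzWith.const a).add (ContinuousLinearMap.toSpanSingleton ℝ d).lipschitz
  have hφ := (innerSL ℝ d).lipschitz.comp_lipschitzOnWith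
    (hg.comp hline.lipschitzOnWith hseg)
  have hder : ∀ᵐ t, t ∈ Icc (0 : ℝ) 1 → ∃ D, HasDerivAt (fun t => ⟪d, g (a + t • d)⟫) D t ∧
      c * ‖d‖ ^ 2 ≤ D := by
    filter_upwards [hae] with t ht htI
    have hgt := (ht (hseg htI)).hasFDerivAt
    have hlin : HasDerivAt (fun t : ℝ => a + t • d) d t := by
      simpa using ((hasDerivAt_id t).smul_const d).const_add a
    refine ⟨_, (innerSL ℝ d).hasFDerivAt.comp_hasDerivAt t (hgt.comp_hasDerivAt t hlin), ?_⟩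
    simpa [real_inner_comm] using hc _ (hseg htI) (ht (hseg htI)) d
  have := hφ.mul_sub_le_sub_of_ae_hasDerivAt zero_le_one hder
  simpa [inner_sub_right, real_inner_comm] using this

theorem _root_.LipschitzOnWith.stronglyMonotoneOn [FiniteDimensional ℝ F]
    (hg : LipschitzOnWith K g U) (hU : IsOpen U) (hUc : Convex ℝ U)
    (hc : ∀ y ∈ U, DifferentiableAt ℝ g y → ∀ u, c * ‖u‖ ^ 2 ≤ ⟪fderiv ℝ g y u, u⟫) :
    StronglyMonotoneOn c g U := by
  intro a ha b hb
  borelize F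
  let μ : Measure F := Measure.addHaar
  have hrad : ∀ᵐ y ∂μ, y ∈ U → DifferentiableAt ℝ g y := by
    filter_upwards [hg.ae_differentiableWithinAt_of_mem] with y hy hyU
    exact (hy hyU).differentiableAt (hU.mem_nhds hyU)
  have hmeas : MeasurableSet {y | y ∈ U → DifferentiableAt ℝ g y} :=
    hU.measurableSet.imp (measurableSet_of_differentiableAt ℝ g)
  -- Translating the segment `[a, b]` by a generic `w` makes `g` differentiable at almost
  -- every point of it; the inequality for `w = 0` then follows by continuity.
  set S := {w | ∀ᵐ t : ℝ, a + w + t • (b - a) ∈ U → DifferentiableAt ℝ g (a + w + t • (b - a))}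
  have hS : Dense S := Measure.dense_of_ae (μ := μ) (ae_ae_add_add_smul μ hmeas hrad a (b - a))
  set V := {w | a + w ∈ U ∧ b + w ∈ U}
  have hV : IsOpen V :=
    (hU.preimage (continuous_const_add a)).inter (hU.preimage (continuous_const_add b))
  have hkey : ∀ w ∈ V ∩ S, c * ‖b - a‖ ^ 2 ≤ ⟪g (b + w) - g (a + w), b - a⟫ := by
    rintro w ⟨⟨haw, hbw⟩, hw⟩
    have hseg : MapsTo (fun t : ℝ => a + w + t • (b - a)) (Icc 0 1) U := by
      intro t ht
      have := hUc.add_smul_sub_mem haw hbw ht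
      rwa [add_sub_add_right_eq_sub] at this
    have := hg.mul_norm_sq_le_inner_sub_of_ae_segment hc hseg hw
    rwa [show a + w + (b - a) = b + w by abel] at this
  have h0 : (0 : F) ∈ closure (V ∩ S) :=
    hS.open_subset_closure_inter hV (by simpa [V] using ⟨ha, hb⟩)
  have hcont : ContinuousAt (fun w => ⟪g (b + w) - g (a + w), b - a⟫) 0 := by
    have hgc (p : F) (hp : p + 0 ∈ U) : ContinuousAt (fun w => g (p + w)) 0 :=
      (hg.continuousOn.continuousAt (hU.mem_nhds hp)).comp (continuous_const_add p).continuousAt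
    exact ((hgc b (by simpa)).sub (hgc a (by simpa))).inner continuousAt_const
  simpa using ContinuousWithinAt.closure_le h0 continuousWithinAt_const
    hcont.continuousWithinAt hkey

end StrongMonotonicity

section Gradient

variable {F : Type*} [NormedAddCommGroup F] [InnerProductSpace ℝ F] [CompleteSpace F]
  {f : F → ℝ}

theorem abs_sub_sub_inner_gradient_le {s : Set F} {L : ℝ≥0} (hs : Convex ℝ s)
    (hf : ∀ y ∈ s, DifferentiableAt ℝ f y) (hlip : LipschitzOnWith L (gradient f) s)
    {y z : F} (hy : y ∈ s) (hz : z ∈ s) :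
    |f z - f y - ⟪gradient f y, z - y⟫| ≤ L * ‖z - y‖ ^ 2 := by
  have hseg : segment ℝ y z ⊆ s := hs.segment_subset hy hz
  have hbound : ∀ w ∈ segment ℝ y z, ‖fderiv ℝ f w - fderiv ℝ f y‖ ≤ L * ‖z - y‖ := by
    intro w hw
    rw [← toDual_gradient, ← toDual_gradient, ← map_sub, LinearIsometryEquiv.norm_map]
    calc ‖gradient f w - gradient f y‖ ≤ L * ‖w - y‖ := hlip.norm_sub_le (hseg hw) hy
      _ ≤ L * ‖z - y‖ := by
        gcongr
        exact norm_sub_le_of_mem_segment hw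
  have := (convex_segment y z).norm_image_sub_le_of_norm_fderiv_le'
    (fun w hw => hf w (hseg hw)) hbound (left_mem_segment ℝ y z) (right_mem_segment ℝ y z)
  rw [← inner_gradient_left, Real.norm_eq_abs] at this
  linarith

end Gradient

section Subdifferential

variable {f : E n → ℝ} {U : Set (E n)} {L : ℝ≥0}

theorem gradient_mem_proxSubdiff (hU : IsOpen U) (hf : ∀ y ∈ U, DifferentiableAt ℝ f y)
    (hlip : LipschitzOnWith L (gradient f) U) {y : E n} (hy : y ∈ U) :
    gradient f y ∈ proxSubdiff (fun w => ((f w : ℝ) : EReal)) y := by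
  obtain ⟨r, hr, hball⟩ := Metric.isOpen_iff.1 hU y hy
  refine ⟨2 * L, by positivity, r, hr, fun z hz => ?_⟩
  have := abs_sub_sub_inner_gradient_le (convex_ball y r) (fun w hw => hf w (hball hw))
    (hlip.mono hball) (mem_ball_self hr) (mem_ball_iff_norm.2 hz)
  rw [← EReal.coe_add, EReal.coe_le_coe_iff]
  linarith [(abs_le.1 this).1]

theorem eq_gradient_of_mem_proxSubdiff {y z : E n} (hf : DifferentiableAt ℝ f y)
    (hz : z ∈ proxSubdiff (fun w => ((f w : ℝ) : EReal)) y) : z = gradient f y := by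
  obtain ⟨r, -, δ, hδ, hprox⟩ := hz
  -- `y` minimises `f - ⟪z, ·⟫ + r/2 ‖· - y‖²` locally, so the derivative there vanishes.
  have hmin : IsLocalMin (fun x' => f x' - ⟪z, x'⟫ + r / 2 * ‖x' - y‖ ^ 2) y := by
    filter_upwards [ball_mem_nhds y hδ] with x' hx'
    have := hprox x' (mem_ball_iff_norm.1 hx')
    rw [← EReal.coe_add, EReal.coe_le_coe_iff, inner_sub_right] at this
    simp only [sub_self, norm_zero]
    linarith
  have hderiv := hmin.hasFDerivAt_eq_zero ((hf.hasFDerivAt.sub (innerSL ℝ z).hasFDerivAt).add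
    (((hasFDerivAt_id y).sub_const y).norm_sq.const_mul (r / 2)))
  simp only [id_eq, sub_self, map_zero, ContinuousLinearMap.comp_id, smul_zero,
    add_zero] at hderiv
  apply (InnerProductSpace.toDual ℝ (E n)).injective
  rw [toDual_gradient, sub_eq_zero.1 hderiv]
  rfl

theorem limSubdiff_eq_singleton_gradient (hU : IsOpen U)
    (hf : ∀ y ∈ U, DifferentiableAt ℝ f y) (hlip : LipschitzOnWith L (gradient f) U)
    {y : E n} (hy : y ∈ U) :
    limSubdiff (fun w => ((f w : ℝ) : EReal)) y = {gradient f y} := by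
  refine eq_singleton_iff_unique_mem.2 ⟨⟨fun _ => y, fun _ => gradient f y,
    fun _ => gradient_mem_proxSubdiff hU hf hlip hy, tendsto_const_nhds, tendsto_const_nhds,
    tendsto_const_nhds⟩, ?_⟩
  rintro z ⟨xk, zk, hprox, hxk, -, hzk⟩
  have hcont : ContinuousAt (gradient f) y := hlip.continuousOn.continuousAt (hU.mem_nhds hy)
  refine tendsto_nhds_unique hzk ((hcont.tendsto.comp hxk).congr' ?_)
  filter_upwards [hxk.eventually_mem (hU.mem_nhds hy)] with k hk
  exact (eq_gradient_of_mem_proxSubdiff (hf _ hk) (hprox k)).symm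

def subdiffGraph (f : E n → ℝ) : Set (E n × E n) :=
  {q | q.2 ∈ limSubdiff (fun w => ((f w : ℝ) : EReal)) q.1}

theorem mem_subdiffGraph_iff (hU : IsOpen U) (hf : ∀ y ∈ U, DifferentiableAt ℝ f y)
    (hlip : LipschitzOnWith L (gradient f) U) {q : E n × E n} (hq : q.1 ∈ U) :
    q ∈ subdiffGraph f ↔ q.2 = gradient f q.1 := by
  change q.2 ∈ limSubdiff _ q.1 ↔ _
  rw [limSubdiff_eq_singleton_gradient hU hf hlip hq, mem_singleton_iff]

end Subdifferential

section Normals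

variable {S : Set (E n × E n)} {G : E n → E n} {V : Set (E n)}

theorem mem_frechetNormal2_of_hasFDerivAt {y : E n} (hV : V ∈ 𝓝 y)
    (hS : ∀ q ∈ S, q.1 ∈ V → q.2 = G q.1) {A : E n →L[ℝ] E n} (hA : HasFDerivAt G A y)
    (w : E n) :
    (ContinuousLinearMap.adjoint A w, -w) ∈ frechetNormal2 S (y, G y) := by
  intro ε hε
  have hlo := hA.isLittleO.def (c := ε / (‖w‖ + 1)) (by positivity)
  obtain ⟨δ, hδ, hball⟩ := Metric.eventually_nhds_iff.1 (hlo.and hV)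
  refine ⟨δ, hδ, fun q hqS hq1 _ => ?_⟩
  have hq1' : dist q.1 y < δ := by rwa [dist_eq_norm]
  obtain ⟨hq, hqV⟩ := hball hq1'
  have hq2 : q.2 = G q.1 := hS q hqS hqV
  simp only [hq2, ContinuousLinearMap.adjoint_inner_left]
  calc ⟪w, A (q.1 - y)⟫ + ⟪-w, G q.1 - G y⟫ = -⟪w, G q.1 - G y - A (q.1 - y)⟫ := by
        simp only [inner_neg_left, inner_sub_right]; ring
    _ ≤ ‖w‖ * (ε / (‖w‖ + 1) * ‖q.1 - y‖) := by
        rw [← inner_neg_right]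
        exact (real_inner_le_norm _ _).trans (by rw [norm_neg]; gcongr)
    _ ≤ ε * ‖q.1 - y‖ := by
        rw [← mul_assoc, mul_div_assoc']
        gcongr
        rw [div_le_iff₀ (by positivity)]
        nlinarith
    _ ≤ ε * (‖q.1 - y‖ + ‖G q.1 - G y‖) := by gcongr; simp

theorem mul_norm_sq_le_inner_of_mem_frechetNormal2 {L : ℝ≥0} {c : ℝ} (hV : IsOpen V)
    (hlip : LipschitzOnWith L G V)
    (hmono : StronglyMonotoneOn c G V) (hS : ∀ y ∈ V, (y, G y) ∈ S) {y a s : E n} (hy : y ∈ V)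
    (hN : (a, -s) ∈ frechetNormal2 S (y, G y)) :
    c * ‖s‖ ^ 2 ≤ ⟪a, s⟫ := by
  suffices h : ∀ ε > 0, c * ‖s‖ ^ 2 - ⟪a, s⟫ ≤ ε * ((1 + L) * ‖s‖) by
    have hlim : Tendsto (fun ε : ℝ => ε * ((1 + L) * ‖s‖)) (𝓝[>] 0) (𝓝 0) := by
      have := (continuous_mul_const ((1 + L) * ‖s‖ : ℝ)).tendsto 0
      rw [zero_mul] at this
      exact this.mono_left nhdsWithin_le_nhds
    linarith [ge_of_tendsto hlim (eventually_nhdsWithin_of_forall h)]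
  intro ε hε
  obtain ⟨δ, hδ, hfre⟩ := hN ε hε
  -- Test the normal inequality against the graph point over `y - t • s` for a small `t > 0`.
  have hnear : ∀ᶠ q in 𝓝 y, q ∈ V ∧ q ∈ ball y δ ∧ G q ∈ ball (G y) δ := by
    have hGy : ContinuousAt G y := hlip.continuousOn.continuousAt (hV.mem_nhds hy)
    filter_upwards [hV.mem_nhds hy, ball_mem_nhds y hδ,
      hGy.preimage_mem_nhds (ball_mem_nhds _ hδ)] with q h1 h2 h3 using ⟨h1, h2, h3⟩
  have hcurve : Tendsto (fun t : ℝ => y - t • s) (𝓝[>] 0) (𝓝 y) := by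
    have : Tendsto (fun t : ℝ => y - t • s) (𝓝[>] 0) (𝓝 (y - (0 : ℝ) • s)) :=
      tendsto_const_nhds.sub ((tendsto_id.mono_left nhdsWithin_le_nhds).smul_const s)
    rwa [zero_smul, sub_zero] at this
  obtain ⟨t, ⟨htV, htδ, htG⟩, ht⟩ :=
    ((hcurve.eventually hnear).and self_mem_nhdsWithin).exists
  have hts : y - t • s - y = -(t • s) := by abel
  have hfq := hfre (y - t • s, G (y - t • s)) (hS _ htV) (by rwa [← dist_eq_norm])
    (by rwa [← dist_eq_norm])
  have hm := hmono y hy _ htV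
  have hL := hlip.norm_sub_le htV hy
  simp only [hts, inner_neg_right, real_inner_smul_right, inner_neg_left, norm_neg, norm_smul,
    Real.norm_of_nonneg (le_of_lt ht)] at hfq hm hL
  have hm' : c * t * ‖s‖ ^ 2 ≤ -⟪G (y - t • s) - G y, s⟫ :=
    le_of_mul_le_mul_left (by linarith) ht
  have hεL := mul_le_mul_of_nonneg_left hL hε.le
  exact le_of_mul_le_mul_left (by linarith [real_inner_comm s (G (y - t • s) - G y)]) ht

theorem mul_norm_sq_le_inner_of_mem_limNormal2 {p : E n × E n} {c : ℝ}
    (hloc : ∀ᶠ q in 𝓝 p, q ∈ S →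
      ∀ a s, (a, -s) ∈ frechetNormal2 S q → c * ‖s‖ ^ 2 ≤ ⟪a, s⟫)
    {v h : E n} (hv : (v, -h) ∈ limNormal2 S p) :
    c * ‖h‖ ^ 2 ≤ ⟪v, h⟫ := by
  obtain ⟨pk, vk, hmem, hpk, hvk⟩ := hv
  have hev : ∀ᶠ k in atTop, c * ‖-(vk k).2‖ ^ 2 ≤ ⟪(vk k).1, -(vk k).2⟫ := by
    filter_upwards [hpk.eventually hloc] with k hk
    exact hk (hmem k).1 _ _ (by simpa using (hmem k).2)
  have hv1 : Tendsto (fun k => (vk k).1) atTop (𝓝 v) := hvk.fst_nhds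
  have hv2 : Tendsto (fun k => -(vk k).2) atTop (𝓝 h) := by simpa using hvk.snd_nhds.neg
  exact le_of_tendsto_of_tendsto ((hv2.norm.pow 2).const_mul c) (hv1.inner hv2) hev

end Normals

theorem mul_norm_sq_le_inner_of_mem_limNormal2_subdiffGraph {f : E n → ℝ} {U : Set (E n)}
    {L : ℝ≥0} {x : E n} (hU : IsOpen U) (hf : ∀ y ∈ U, DifferentiableAt ℝ f y)
    (hlip : LipschitzOnWith L (gradient f) U) (hx : x ∈ U) {c : ℝ}
    (hmono : StronglyMonotoneOn c (gradient f) U)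
    {p h : E n} (hp : (p, -h) ∈ limNormal2 (subdiffGraph f) (x, gradient f x)) :
    c * ‖h‖ ^ 2 ≤ ⟪p, h⟫ := by
  refine mul_norm_sq_le_inner_of_mem_limNormal2 ?_ hp
  filter_upwards [continuous_fst.continuousAt.preimage_mem_nhds (hU.mem_nhds hx)]
    with q hqU hq a s hN
  rw [show q = (q.1, gradient f q.1) from
    Prod.ext rfl ((mem_subdiffGraph_iff hU hf hlip hqU).1 hq)] at hN
  exact mul_norm_sq_le_inner_of_mem_frechetNormal2 hU hlip hmono
    (fun y hy => (mem_subdiffGraph_iff hU hf hlip hy).2 rfl) hqU hN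

section LimitingHessians

variable {f : E n → ℝ} {U : Set (E n)} {L : ℝ≥0} {x z : E n}

theorem mem_limNormal2_of_mem_limHessians (hU : IsOpen U)
    (hf : ∀ y ∈ U, DifferentiableAt ℝ f y) (hlip : LipschitzOnWith L (gradient f) U)
    (hx : x ∈ U) {Q : E n →L[ℝ] E n} (hQ : Q ∈ limHessians f x z) (w : E n) :
    (ContinuousLinearMap.adjoint Q w, -w) ∈ limNormal2 (subdiffGraph f) (x, z) := by
  obtain ⟨xk, hdk, hxk, -, hgk, hQk⟩ := hQ
  obtain ⟨N, hN⟩ := eventually_atTop.1 (hxk.eventually_mem (hU.mem_nhds hx))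
  have hU' (k : ℕ) : xk (k + N) ∈ U := hN _ (Nat.le_add_left N k)
  have hadj : Tendsto (fun k => ContinuousLinearMap.adjoint (fderiv ℝ (gradient f) (xk k)) w)
      atTop (𝓝 (ContinuousLinearMap.adjoint Q w)) :=
    ((ContinuousLinearMap.apply ℝ (E n) w).continuous.comp
      ContinuousLinearMap.adjoint.continuous).tendsto Q |>.comp hQk
  refine ⟨fun k => (xk (k + N), gradient f (xk (k + N))),
    fun k => (ContinuousLinearMap.adjoint (fderiv ℝ (gradient f) (xk (k + N))) w, -w),
    fun k => ⟨(mem_subdiffGraph_iff hU hf hlip (hU' k)).2 rfl, ?_⟩,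
    (hxk.prodMk_nhds hgk).comp (tendsto_add_atTop_nat N),
    (hadj.prodMk_nhds tendsto_const_nhds).comp (tendsto_add_atTop_nat N)⟩
  exact mem_frechetNormal2_of_hasFDerivAt (hU.mem_nhds (hU' k))
    (fun q hq hqU => (mem_subdiffGraph_iff hU hf hlip hqU).1 hq) (hdk _).hasFDerivAt w

theorem limHessians_eq_preimage_closure (f : E n → ℝ) (x z : E n) :
    limHessians f x z = (fun Q => (x, f x, z, Q)) ⁻¹' closure
      ((fun y => (y, f y, gradient f y, fderiv ℝ (gradient f) y)) ''
        {y | DifferentiableAt ℝ (gradient f) y}) := by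
  ext Q
  rw [mem_preimage, mem_closure_iff_seq_limit]
  constructor
  · rintro ⟨xk, hdk, hxk, hfk, hgk, hQk⟩
    exact ⟨_, fun k => mem_image_of_mem _ (hdk k),
      hxk.prodMk_nhds (hfk.prodMk_nhds (hgk.prodMk_nhds hQk))⟩
  · rintro ⟨pk, hpk, hlim⟩
    choose xk hdk hxk using hpk
    obtain rfl : (fun k => (xk k, f (xk k), gradient f (xk k),
        fderiv ℝ (gradient f) (xk k))) = pk := funext hxk
    exact ⟨xk, hdk, hlim.fst_nhds, hlim.snd_nhds.fst_nhds, hlim.snd_nhds.snd_nhds.fst_nhds,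
      hlim.snd_nhds.snd_nhds.snd_nhds⟩

theorem isClosed_limHessians (f : E n → ℝ) (x z : E n) : IsClosed (limHessians f x z) := by
  rw [limHessians_eq_preimage_closure]
  exact isClosed_closure.preimage (by fun_prop)

theorem limHessians_subset_closedBall (hU : IsOpen U) (hlip : LipschitzOnWith L (gradient f) U)
    (hx : x ∈ U) : limHessians f x z ⊆ closedBall 0 L := by
  rintro Q ⟨xk, -, hxk, -, -, hQk⟩
  refine isClosed_closedBall.mem_of_tendsto hQk ?_
  filter_upwards [hxk.eventually_mem (hU.mem_nhds hx)] with k hk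
  exact mem_closedBall_zero_iff.2 (norm_fderiv_le_of_lipschitzOn ℝ (hU.mem_nhds hk) hlip)

theorem isCompact_limHessians (hU : IsOpen U) (hlip : LipschitzOnWith L (gradient f) U)
    (hx : x ∈ U) : IsCompact (limHessians f x z) :=
  isCompact_of_isClosed_isBounded (isClosed_limHessians f x z)
    (isBounded_closedBall.subset (limHessians_subset_closedBall hU hlip hx))

theorem eventually_lt_inner_fderiv_gradient (hU : IsOpen U)
    (hf : ∀ y ∈ U, DifferentiableAt ℝ f y) (hlip : LipschitzOnWith L (gradient f) U)
    (hx : x ∈ U) {c : ℝ}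
    (hc : ∀ Q ∈ limHessians f x (gradient f x), ∀ h : E n, ‖h‖ = 1 → c < ⟪Q h, h⟫) :
    ∀ᶠ y in 𝓝 x, DifferentiableAt ℝ (gradient f) y →
      ∀ u : E n, ‖u‖ = 1 → c < ⟪fderiv ℝ (gradient f) y u, u⟫ := by
  by_contra hcon
  simp only [not_eventually, Classical.not_imp, not_forall, not_lt] at hcon
  obtain ⟨y, hyx, hy⟩ := exists_seq_forall_of_frequently hcon
  choose hdy u hu hle using hy
  have hmem : ∃ᶠ k in atTop,
      (fderiv ℝ (gradient f) (y k), u k) ∈ closedBall (0 : E n →L[ℝ] E n) L ×ˢ sphere 0 1 := by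
    refine (hyx.eventually_mem (hU.mem_nhds hx)).frequently.mono fun k hk => ⟨?_, ?_⟩
    · exact mem_closedBall_zero_iff.2 (norm_fderiv_le_of_lipschitzOn ℝ (hU.mem_nhds hk) hlip)
    · exact mem_sphere_zero_iff_norm.2 (hu k)
  obtain ⟨⟨Q, h⟩, hQh, φ, hφ, hlim⟩ :=
    ((isCompact_closedBall _ _).prod (isCompact_sphere _ _)).tendsto_subseq' hmem
  have hyφ : Tendsto (y ∘ φ) atTop (𝓝 x) := hyx.comp hφ.tendsto_atTop
  have hQ : Q ∈ limHessians f x (gradient f x) :=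
    ⟨y ∘ φ, fun k => hdy _, hyφ, (hf x hx).continuousAt.tendsto.comp hyφ,
      (hlip.continuousOn.continuousAt (hU.mem_nhds hx)).tendsto.comp hyφ, hlim.fst_nhds⟩
  have hquad : Tendsto (fun k => ⟪fderiv ℝ (gradient f) (y (φ k)) (u (φ k)), u (φ k)⟫) atTop
      (𝓝 ⟪Q h, h⟫) :=
    ((isBoundedBilinearMap_apply.continuous.tendsto (Q, h)).comp hlim).inner hlim.snd_nhds
  exact (hc Q hQ h (mem_sphere_zero_iff_norm.1 hQh.2)).not_ge
    (le_of_tendsto' hquad fun k => hle _)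

theorem exists_ball_stronglyMonotoneOn_gradient (hU : IsOpen U)
    (hf : ∀ y ∈ U, DifferentiableAt ℝ f y) (hlip : LipschitzOnWith L (gradient f) U)
    (hx : x ∈ U) {c : ℝ}
    (hc : ∀ Q ∈ limHessians f x (gradient f x), ∀ h : E n, ‖h‖ = 1 → c < ⟪Q h, h⟫) :
    ∃ ρ > 0, ball x ρ ⊆ U ∧ StronglyMonotoneOn c (gradient f) (ball x ρ) := by
  obtain ⟨ρ, hρ, hball⟩ := Metric.eventually_nhds_iff_ball.1
    ((eventually_lt_inner_fderiv_gradient hU hf hlip hx hc).and (hU.mem_nhds hx))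
  have hρU : ball x ρ ⊆ U := fun y hy => (hball y hy).2
  exact ⟨ρ, hρ, hρU, (hlip.mono hρU).stronglyMonotoneOn isOpen_ball (convex_ball x ρ)
    fun y hy hyd => mul_norm_sq_le_inner_of_forall_norm_eq_one
      fun u hu => ((hball y hy).1 hyd u hu).le⟩

end LimitingHessians

/-- Corollary `cor:equiv` for `C^{1,1}` functions: the
coderivative positivity condition is equivalent to uniform positive
definiteness of the limiting Hessians. -/
theorem statement9
    (f : E n → ℝ) (x : E n)
    (hC11 : C11Near f x) (h0 : gradient f x = 0) :
    (∀ h : E n, ‖h‖ = 1 →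
      ∀ p ∈ coderiv (fun y => limSubdiff (fun w => ((f w : ℝ) : EReal)) y) x 0 h,
        0 < (⟪p, h⟫ : ℝ)) ↔
    (∃ β : ℝ, 0 < β ∧ ∀ Q ∈ limHessians f x 0, ∀ h : E n, ‖h‖ = 1 →
      β ≤ (⟪Q h, h⟫ : ℝ)) := by
  obtain ⟨δ, hδ, hdiff, L, hlip⟩ := hC11
  have hx : x ∈ ball x δ := mem_ball_self hδ
  constructor
  · intro hcod
    have hpos : ∀ Qh ∈ limHessians f x 0 ×ˢ sphere (0 : E n) 1, 0 < ⟪Qh.1 Qh.2, Qh.2⟫ := by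
      rintro ⟨Q, h⟩ ⟨hQ, hh⟩
      have := hcod h (mem_sphere_zero_iff_norm.1 hh) _
        (mem_limNormal2_of_mem_limHessians isOpen_ball hdiff hlip hx hQ h)
      rwa [ContinuousLinearMap.adjoint_inner_left, real_inner_comm] at this
    obtain ⟨β, hβ, hle⟩ := ((isCompact_limHessians isOpen_ball hlip hx).prod
      (isCompact_sphere 0 1)).exists_forall_le' (by fun_prop) hpos
    exact ⟨β, hβ, fun Q hQ h hh => hle (Q, h) ⟨hQ, mem_sphere_zero_iff_norm.2 hh⟩⟩
  · rintro ⟨β, hβ, hB⟩ h hh p hp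
    obtain ⟨ρ, hρ, hρδ, hmono⟩ := exists_ball_stronglyMonotoneOn_gradient isOpen_ball hdiff hlip
      hx (c := β / 2) fun Q hQ h hh => by rw [h0] at hQ; linarith [hB Q hQ h hh]
    have := mul_norm_sq_le_inner_of_mem_limNormal2_subdiffGraph isOpen_ball
      (fun y hy => hdiff y (hρδ hy)) (hlip.mono hρδ) (mem_ball_self hρ) hmono
      (by rw [h0]; exact hp)
    rw [hh] at this
    linarith

end Paper
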